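/- Let r, r̂_V, μ̂ ∈ ℝ, σ > 0, s > 0, 𝒯 > 0, and set ν₁ := (μ̂ − r + σ²/2)/σ, ν₂ := ν₁ − σ. Assume r̂_V ≠ μ̂, r̂_V ≠ r, and c := 2(r̂_V − μ̂) + ν₁² > 0 (equivalently c = 2(r̂_V − r) + ν₂²). Then ∫_0^𝒯 e^{−r̂_V w} BS_C(s, s e^{r w}, w) dw = s ( Υ₀(𝒯, r̂_V − μ̂, ν₁) − Υ₀(𝒯, r̂_V − r, ν₂) ), where BS_C is the Black–Scholes call function with drift m = μ̂ and volatility σ. (This identity evaluates the call-recovery integral in the forward valuation at the at-the-money risk-free strike.) -/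

import Mathlib

open MeasureTheory intervalIntegral Real ProbabilityTheory Filter Asymptotics

/-- The standard Gaussian measure on ℝ. -/
noncomputable def gaussMeasure : Measure ℝ := gaussianReal 0 1

/-- The standard normal CDF. -/
noncomputable def Phi (x : ℝ) : ℝ :=
  ∫ u in Set.Iic x, Real.exp (-u ^ 2 / 2) / Real.sqrt (2 * Real.pi)

/-- The standard normal density. -/
noncomputable def gaussPdf (x : ℝ) : ℝ := Real.exp (-x ^ 2 / 2) / Real.sqrt (2 * Real.pi)

/-- Black–Scholes `d₁` with volatility `σ` and drift `m`. -/
noncomputable def d1 (σ m s k t : ℝ) : ℝ :=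
  (Real.log (s / k) + (m + σ ^ 2 / 2) * t) / (σ * Real.sqrt t)

/-- Black–Scholes `d₂` with volatility `σ` and drift `m`. -/
noncomputable def d2 (σ m s k t : ℝ) : ℝ := d1 σ m s k t - σ * Real.sqrt t

/-- Black–Scholes call price (undiscounted) with volatility `σ` and drift `m`. -/
noncomputable def BSC (σ m s k t : ℝ) : ℝ :=
  s * Real.exp (m * t) * Phi (d1 σ m s k t) - k * Phi (d2 σ m s k t)

/-- Black–Scholes put price (undiscounted) with volatility `σ` and drift `m`. -/
noncomputable def BSP (σ m s k t : ℝ) : ℝ :=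
  k * Phi (-d2 σ m s k t) - s * Real.exp (m * t) * Phi (-d1 σ m s k t)

/-- The function `Υ₀` from the ATM forward valuation formula. -/
noncomputable def Ups0 (t x y : ℝ) : ℝ :=
  y / (x * Real.sqrt (2 * x + y ^ 2)) * (Phi (Real.sqrt ((2 * x + y ^ 2) * t)) - 1 / 2)
    - 1 / x * (Real.exp (-x * t) * Phi (y * Real.sqrt t) - 1 / 2)

/-- The second-order approximation `Υ̃` of the generalized `Υ` function. -/
noncomputable def UpsTilde (t x y z : ℝ) : ℝ :=
  Ups0 t x y
    + 2 / Real.sqrt (2 * x + y ^ 2) * (Phi (Real.sqrt ((2 * x + y ^ 2) * t)) - 1 / 2)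
      * (z - y / 2 * z ^ 2)

/-- Covariance of two real random variables. -/
noncomputable def cov {Ω : Type*} [MeasurableSpace Ω] (P : Measure Ω) (X Y : Ω → ℝ) : ℝ :=
  (∫ ω, X ω * Y ω ∂P) - (∫ ω, X ω ∂P) * (∫ ω, Y ω ∂P)

/-- Variance of a real random variable. -/
noncomputable def var {Ω : Type*} [MeasurableSpace Ω] (P : Measure Ω) (X : Ω → ℝ) : ℝ :=
  cov P X X

/-- Correlation of two real random variables. -/
noncomputable def corr {Ω : Type*} [MeasurableSpace Ω] (P : Measure Ω) (X Y : Ω → ℝ) : ℝ :=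
  cov P X Y / Real.sqrt (var P X * var P Y)

/-! At the strike `s e^{rw}` the Black–Scholes arguments collapse to `d₁ = ν₁√w` and
`d₂ = ν₂√w`, so the discounted call splits into two terms of the form `s e^{-xw} Φ(y√w)`.
Each is integrated in closed form because `t ↦ Υ₀(t, x, y)` is an antiderivative of
`e^{-xt} Φ(y√t)` vanishing at `t = 0`. -/

lemma gaussPdf_eq_gaussianPDFReal : gaussPdf = gaussianPDFReal 0 1 := by
  ext x
  simp [gaussPdf, gaussianPDFReal, div_eq_inv_mul]

@[fun_prop]
lemma continuous_gaussPdf : Continuous gaussPdf := by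
  unfold gaussPdf
  fun_prop

lemma integrable_gaussPdf : Integrable gaussPdf :=
  gaussPdf_eq_gaussianPDFReal ▸ integrable_gaussianPDFReal 0 1

lemma integral_gaussPdf : ∫ x, gaussPdf x = 1 :=
  gaussPdf_eq_gaussianPDFReal ▸ integral_gaussianPDFReal_eq_one 0 one_ne_zero

lemma gaussPdf_neg (x : ℝ) : gaussPdf (-x) = gaussPdf x := by
  simp [gaussPdf]

lemma gaussPdf_eq_exp_mul_gaussPdf (a b : ℝ) :
    gaussPdf a = Real.exp ((b ^ 2 - a ^ 2) / 2) * gaussPdf b := by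
  rw [gaussPdf, gaussPdf, ← mul_div_assoc, ← Real.exp_add]
  ring_nf

lemma hasDerivAt_Phi (x : ℝ) : HasDerivAt Phi (gaussPdf x) x := by
  have hPhi : Phi = fun y => Phi 0 + ∫ u in (0 : ℝ)..y, gaussPdf u := by
    ext y
    rw [← integral_Iic_sub_Iic integrable_gaussPdf.integrableOn integrable_gaussPdf.integrableOn]
    exact (add_sub_cancel _ _).symm
  rw [hPhi]
  exact (integral_hasDerivAt_right integrable_gaussPdf.intervalIntegrable
    (continuous_gaussPdf.stronglyMeasurableAtFilter _ _)
    continuous_gaussPdf.continuousAt).const_add _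

@[fun_prop]
lemma continuous_Phi : Continuous Phi :=
  continuous_iff_continuousAt.2 fun x => (hasDerivAt_Phi x).continuousAt

lemma Phi_zero : Phi 0 = 1 / 2 := by
  have hsymm : ∫ u in Set.Ioi 0, gaussPdf u = ∫ u in Set.Iic 0, gaussPdf u := by
    simpa [gaussPdf_neg] using integral_comp_neg_Ioi 0 gaussPdf
  have htotal := integral_Iic_add_Ioi (b := 0) integrable_gaussPdf.integrableOn
    integrable_gaussPdf.integrableOn
  rw [integral_gaussPdf, hsymm] at htotal
  change Phi 0 + Phi 0 = 1 at htotal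
  linarith

lemma hasDerivAt_Phi_mul_sqrt (k : ℝ) {t : ℝ} (ht : 0 < t) :
    HasDerivAt (fun t => Phi (k * Real.sqrt t))
      (gaussPdf (k * Real.sqrt t) * (k * (1 / (2 * Real.sqrt t)))) t :=
  (hasDerivAt_Phi _).comp t ((Real.hasDerivAt_sqrt ht.ne').const_mul k)

section Ups0

variable {x y : ℝ}

lemma Ups0_zero (x y : ℝ) : Ups0 0 x y = 0 := by
  simp [Ups0, Phi_zero]

@[fun_prop]
lemma continuous_Ups0 (x y : ℝ) : Continuous fun t => Ups0 t x y := by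
  unfold Ups0
  fun_prop

lemma hasDerivAt_Ups0 (hx : x ≠ 0) (hc : 0 < 2 * x + y ^ 2) {t : ℝ} (ht : 0 < t) :
    HasDerivAt (fun t => Ups0 t x y) (Real.exp (-x * t) * Phi (y * Real.sqrt t)) t := by
  set c := 2 * x + y ^ 2 with hc_def
  have hUps0 : (fun t => Ups0 t x y) = fun t => y / (x * Real.sqrt c) *
      (Phi (Real.sqrt c * Real.sqrt t) - 1 / 2)
        - 1 / x * (Real.exp (-x * t) * Phi (y * Real.sqrt t) - 1 / 2) := by
    ext t
    rw [Ups0, Real.sqrt_mul hc.le]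
  have hexp : HasDerivAt (fun t => Real.exp (-x * t)) (Real.exp (-x * t) * -x) t := by
    simpa using ((hasDerivAt_id t).const_mul (-x)).exp
  have hderiv := (((hasDerivAt_Phi_mul_sqrt (Real.sqrt c) ht).sub_const (1 / 2)).const_mul
    (y / (x * Real.sqrt c))).sub
      (((hexp.mul (hasDerivAt_Phi_mul_sqrt y ht)).sub_const (1 / 2)).const_mul (1 / x))
  -- the two Gaussian-density terms cancel, since `c t = (y √t)² + 2 x t`
  have hpdf : gaussPdf (Real.sqrt c * Real.sqrt t)
      = Real.exp (-x * t) * gaussPdf (y * Real.sqrt t) := by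
    rw [gaussPdf_eq_exp_mul_gaussPdf _ (y * Real.sqrt t), mul_pow, mul_pow,
      Real.sq_sqrt hc.le, Real.sq_sqrt ht.le, hc_def]
    ring_nf
  have hsc : Real.sqrt c ≠ 0 := (Real.sqrt_pos.2 hc).ne'
  have hst : Real.sqrt t ≠ 0 := (Real.sqrt_pos.2 ht).ne'
  rw [hUps0]
  refine hderiv.congr_deriv ?_
  rw [hpdf]
  field_simp
  ring

lemma integral_exp_mul_Phi_mul_sqrt (hx : x ≠ 0) (hc : 0 < 2 * x + y ^ 2) {T : ℝ}
    (hT : 0 ≤ T) :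
    ∫ w in (0 : ℝ)..T, Real.exp (-x * w) * Phi (y * Real.sqrt w) = Ups0 T x y := by
  have hint :
      IntervalIntegrable (fun w => Real.exp (-x * w) * Phi (y * Real.sqrt w)) volume 0 T :=
    (by fun_prop : Continuous _).intervalIntegrable _ _
  rw [integral_eq_sub_of_hasDeriv_right_of_le hT (continuous_Ups0 x y).continuousOn
    (fun t ht => (hasDerivAt_Ups0 hx hc ht.1).hasDerivWithinAt) hint, Ups0_zero, sub_zero]

end Ups0

section BlackScholes

variable {σ s : ℝ}

lemma d1_strike_mul_exp (hs : s ≠ 0) (hσ : σ ≠ 0) (m r t : ℝ) :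
    d1 σ m s (s * Real.exp (r * t)) t = (m - r + σ ^ 2 / 2) / σ * Real.sqrt t := by
  have hlog : Real.log (s / (s * Real.exp (r * t))) = -(r * t) := by
    rw [div_mul_cancel_left₀ hs, Real.log_inv, Real.log_exp]
  rw [d1, hlog]
  rcases le_or_gt t 0 with ht | ht
  · simp [Real.sqrt_eq_zero'.2 ht]
  · have hst : Real.sqrt t ≠ 0 := (Real.sqrt_pos.2 ht).ne'
    field_simp
    linear_combination (2 * (r - m) - σ ^ 2) * Real.sq_sqrt ht.le

lemma exp_mul_BSC_strike_mul_exp (hs : s ≠ 0) (hσ : σ ≠ 0) (a m r t : ℝ) :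
    Real.exp (-a * t) * BSC σ m s (s * Real.exp (r * t)) t
      = s * (Real.exp (-(a - m) * t) * Phi ((m - r + σ ^ 2 / 2) / σ * Real.sqrt t)
        - Real.exp (-(a - r) * t) * Phi (((m - r + σ ^ 2 / 2) / σ - σ) * Real.sqrt t)) := by
  rw [BSC, d2, d1_strike_mul_exp hs hσ, ← sub_mul, show -(a - m) * t = -a * t + m * t by ring,
    show -(a - r) * t = -a * t + r * t by ring, Real.exp_add, Real.exp_add]
  ring

end BlackScholes

/-- The call-recovery integral in the forward valuation at the at-the-money
risk-free strike, in terms of `Υ₀`. -/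
theorem call_recovery_integral_ATMRF
    (r rV μ σ s 𝒯 : ℝ) (hσ : 0 < σ) (hs : 0 < s) (hT : 0 < 𝒯)
    (ν1 ν2 : ℝ) (hν1 : ν1 = (μ - r + σ ^ 2 / 2) / σ) (hν2 : ν2 = ν1 - σ)
    (h1 : rV ≠ μ) (h2 : rV ≠ r) (hc : 0 < 2 * (rV - μ) + ν1 ^ 2) :
    ∫ w in (0 : ℝ)..𝒯, Real.exp (-rV * w) * BSC σ μ s (s * Real.exp (r * w)) w
      = s * (Ups0 𝒯 (rV - μ) ν1 - Ups0 𝒯 (rV - r) ν2) := by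
  have hc' : 0 < 2 * (rV - r) + ν2 ^ 2 := by
    convert hc using 1
    rw [hν2, hν1]
    field_simp
    ring
  subst hν2 hν1
  simp_rw [exp_mul_BSC_strike_mul_exp hs.ne' hσ.ne']
  rw [intervalIntegral.integral_const_mul,
    integral_sub ((by fun_prop : Continuous _).intervalIntegrable _ _)
      ((by fun_prop : Continuous _).intervalIntegrable _ _),
    integral_exp_mul_Phi_mul_sqrt (sub_ne_zero.2 h1) hc hT.le,
    integral_exp_mul_Phi_mul_sqrt (sub_ne_zero.2 h2) hc' hT.le]
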